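/- Let G and H be signed weighted graphs on the same finite vertex set V with d_cut(G⁺,H⁺) ≤ β. Then for every clustering 𝒞 = {C₁,…,C_k} of V, the quantity Σ_{1≤i<j≤k} (w_{H⁺}(C_i,C_j) − w_{G⁺}(C_i,C_j)) has absolute value at most 2β, where for disjoint sets S,T, w(S,T) := Σ_{u∈S,v∈T} w({u,v}). -/

import Mathlib

/-!
Put `w := H⁺ - G⁺`, so every `|pairSum w S T| ≤ β`. Average the cut value
`pairSum w (⋃_{i ∈ I} C i) (⋃_{j ∉ I} C j)` over all `2^k` sets `I` of clusters: an ordered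
pair `(i, j)` with `i ≠ j` is separated by exactly a quarter of the `I`, so the average equals
`¼ Σ_{i ≠ j} w(C i, C j) = ½ Σ_{i < j} w(C i, C j)`, by symmetry of `w`. Being an average of
numbers of absolute value at most `β`, it is itself at most `β` in absolute value.
-/

open Finset

/-- `pairSum w S T = Σ_{u ∈ S, v ∈ T, u ≠ v} w u v`. -/
noncomputable def pairSum {V : Type*} [Fintype V] [DecidableEq V]
    (w : V → V → ℝ) (S T : Finset V) : ℝ :=
  ∑ u ∈ S, ∑ v ∈ T, if u = v then 0 else w u v

section Counting

variable {ι : Type*} [Fintype ι] [DecidableEq ι]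

lemma four_mul_card_filter_mem_and_notMem {i j : ι} (hij : i ≠ j) :
    4 * #{I : Finset ι | i ∈ I ∧ j ∉ I} = 2 ^ Fintype.card ι := by
  have himage : ({I : Finset ι | i ∈ I ∧ j ∉ I} : Finset (Finset ι)) =
      ({i, j}ᶜ : Finset ι).powerset.image (insert i) := by
    ext I
    simp only [mem_filter, mem_univ, true_and, mem_image, mem_powerset]
    constructor
    · rintro ⟨hi, hj⟩
      refine ⟨I.erase i, fun x hx => ?_, insert_erase hi⟩
      simp only [mem_compl, mem_insert, mem_singleton, not_or]
      exact ⟨ne_of_mem_erase hx, fun h => hj (h ▸ mem_of_mem_erase hx)⟩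
    · rintro ⟨J, hJ, rfl⟩
      refine ⟨mem_insert_self i J, fun hj => ?_⟩
      rcases mem_insert.mp hj with h | h
      · exact hij h.symm
      · simpa using hJ h
  have hinj : Set.InjOn (insert i) (({i, j}ᶜ : Finset ι).powerset : Set (Finset ι)) := by
    intro J₁ hJ₁ J₂ hJ₂ h
    have hi : ∀ J ∈ (({i, j}ᶜ : Finset ι).powerset : Set (Finset ι)), i ∉ J :=
      fun J hJ hiJ => by simpa using (mem_powerset.mp hJ) hiJ
    rw [← erase_insert (hi J₁ hJ₁), ← erase_insert (hi J₂ hJ₂), h]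
  have htwo : 2 ≤ Fintype.card ι := by
    simpa [card_pair hij] using card_le_univ ({i, j} : Finset ι)
  rw [himage, card_image_of_injOn hinj, card_powerset, card_compl, card_pair hij]
  obtain ⟨n, hn⟩ := Nat.exists_eq_add_of_le' htwo
  rw [hn, Nat.add_sub_cancel, pow_add]
  ring

lemma four_nsmul_sum_cuts {M : Type*} [AddCommMonoid M] (f : ι → ι → M) :
    4 • ∑ I : Finset ι, ∑ i ∈ I, ∑ j ∈ Iᶜ, f i j =
      2 ^ Fintype.card ι • ∑ i, ∑ j, if i = j then 0 else f i j := by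
  have hswap : ∑ I : Finset ι, ∑ i ∈ I, ∑ j ∈ Iᶜ, f i j =
      ∑ i, ∑ j, #{I : Finset ι | i ∈ I ∧ j ∉ I} • f i j := by
    calc ∑ I : Finset ι, ∑ i ∈ I, ∑ j ∈ Iᶜ, f i j
        = ∑ I : Finset ι, ∑ i, ∑ j, if i ∈ I ∧ j ∉ I then f i j else 0 := by
          refine sum_congr rfl fun I _ => ?_
          rw [← Fintype.sum_ite_mem]
          refine sum_congr rfl fun i _ => ?_
          by_cases hi : i ∈ I
          · simp [hi, ← Fintype.sum_ite_mem]
          · simp [hi]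
      _ = ∑ i, ∑ j, ∑ I : Finset ι, if i ∈ I ∧ j ∉ I then f i j else 0 := by
          rw [sum_comm]; simp_rw [sum_comm (s := (univ : Finset (Finset ι)))]
      _ = ∑ i, ∑ j, #{I : Finset ι | i ∈ I ∧ j ∉ I} • f i j := by
          simp_rw [← sum_filter, sum_const]
  rw [hswap, smul_sum, smul_sum]
  refine sum_congr rfl fun i _ => ?_
  rw [smul_sum, smul_sum]
  refine sum_congr rfl fun j _ => ?_
  split_ifs with hij
  · subst hij; simp
  · rw [smul_smul, four_mul_card_filter_mem_and_notMem hij]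

end Counting

section Order

variable {ι M : Type*} [Fintype ι] [LinearOrder ι] [AddCommMonoid M]

lemma sum_sum_ite_ne_eq_two_nsmul {f : ι → ι → M} (hf : ∀ i j, f i j = f j i) :
    ∑ i, ∑ j, (if i = j then 0 else f i j) = 2 • ∑ i, ∑ j, if i < j then f i j else 0 := by
  have hgt : ∑ i, ∑ j, (if j < i then f i j else 0) = ∑ i, ∑ j, if i < j then f i j else 0 := by
    rw [sum_comm]
    simp_rw [hf]
  rw [two_nsmul]
  nth_rw 2 [← hgt]
  simp_rw [← sum_add_distrib]
  refine sum_congr rfl fun i _ => sum_congr rfl fun j _ => ?_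
  rcases lt_trichotomy i j with h | rfl | h
  · simp [h.ne, h, h.not_gt]
  · simp
  · simp [h.ne', h, h.not_gt]

end Order

section PairSum

variable {V : Type*} [Fintype V] [DecidableEq V]

lemma pairSum_sub (w w' : V → V → ℝ) (S T : Finset V) :
    pairSum (w - w') S T = pairSum w S T - pairSum w' S T := by
  simp only [pairSum, ← sum_sub_distrib]
  refine sum_congr rfl fun u _ => sum_congr rfl fun v _ => ?_
  split_ifs <;> simp

lemma pairSum_comm {w : V → V → ℝ} (hw : ∀ u v, w u v = w v u) (S T : Finset V) :
    pairSum w S T = pairSum w T S := by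
  rw [pairSum, pairSum, sum_comm]
  refine sum_congr rfl fun v _ => sum_congr rfl fun u _ => ?_
  exact if_congr eq_comm rfl (hw u v)

lemma pairSum_biUnion_biUnion {ι : Type*} (w : V → V → ℝ) {C : ι → Finset V}
    (hC : Pairwise fun i j => Disjoint (C i) (C j)) (I J : Finset ι) :
    pairSum w (I.biUnion C) (J.biUnion C) = ∑ i ∈ I, ∑ j ∈ J, pairSum w (C i) (C j) := by
  rw [pairSum, sum_biUnion (hC.set_pairwise _)]
  refine sum_congr rfl fun i _ => ?_
  rw [sum_comm, sum_biUnion (hC.set_pairwise _)]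
  exact sum_congr rfl fun j _ => sum_comm

theorem abs_sum_pairSum_lt_le_two_mul {ι : Type*} [Fintype ι] [LinearOrder ι]
    {w : V → V → ℝ} {β : ℝ} (hw : ∀ u v, w u v = w v u)
    (hcut : ∀ S T : Finset V, |pairSum w S T| ≤ β)
    {C : ι → Finset V} (hC : Pairwise fun i j => Disjoint (C i) (C j)) :
    |∑ i, ∑ j, if i < j then pairSum w (C i) (C j) else 0| ≤ 2 * β := by
  set T := ∑ i, ∑ j, if i < j then pairSum w (C i) (C j) else 0
  set cuts := ∑ I : Finset ι, pairSum w (I.biUnion C) (Iᶜ.biUnion C)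
  have hcuts : 4 * cuts = 2 ^ Fintype.card ι * (2 * T) := by
    have := four_nsmul_sum_cuts fun i j => pairSum w (C i) (C j)
    rw [sum_sum_ite_ne_eq_two_nsmul fun i j => pairSum_comm hw _ _] at this
    simp only [cuts, pairSum_biUnion_biUnion w hC]
    simpa [nsmul_eq_mul] using this
  have hbound : |cuts| ≤ 2 ^ Fintype.card ι * β := by
    calc |cuts| ≤ ∑ I : Finset ι, |pairSum w (I.biUnion C) (Iᶜ.biUnion C)| :=
          abs_sum_le_sum_abs _ _
      _ ≤ ∑ _I : Finset ι, β := sum_le_sum fun I _ => hcut _ _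
      _ = 2 ^ Fintype.card ι * β := by simp
  have hpos : (0 : ℝ) < 2 ^ Fintype.card ι := by positivity
  have habs : 2 ^ Fintype.card ι * (2 * |T|) = 4 * |cuts| := by
    simpa [abs_mul, abs_of_pos hpos] using (congrArg abs hcuts).symm
  have h : 2 ^ Fintype.card ι * (2 * |T|) ≤ 2 ^ Fintype.card ι * (4 * β) := by
    rw [habs]; linarith
  linarith [le_of_mul_le_mul_left h hpos]

end PairSum

theorem stmt1_general {V : Type*} [Fintype V] [DecidableEq V]
    (Gp Hp : V → V → ℝ) (β : ℝ)
    (hGpsymm : ∀ u v, Gp u v = Gp v u) (hHpsymm : ∀ u v, Hp u v = Hp v u)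
    (hcutp : ∀ S T : Finset V, |pairSum Gp S T - pairSum Hp S T| ≤ β)
    {k : ℕ} (C : Fin k → Finset V)
    (hdisj : ∀ i j, i ≠ j → Disjoint (C i) (C j)) :
    |∑ i, ∑ j, if i < j then pairSum Hp (C i) (C j) - pairSum Gp (C i) (C j) else 0|
      ≤ 2 * β := by
  simp only [← pairSum_sub]
  refine abs_sum_pairSum_lt_le_two_mul (fun u v => ?_) (fun S T => ?_) hdisj
  · simp [hGpsymm u v, hHpsymm u v]
  · rw [pairSum_sub, abs_sub_comm]
    exact hcutp S T

theorem stmt1 {V : Type*} [Fintype V] [DecidableEq V]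
    (Gp Hp : V → V → ℝ) (β : ℝ)
    (hGpsymm : ∀ u v, Gp u v = Gp v u) (hHpsymm : ∀ u v, Hp u v = Hp v u)
    (hGpnn : ∀ u v, 0 ≤ Gp u v) (hHpnn : ∀ u v, 0 ≤ Hp u v)
    (hcutp : ∀ S T : Finset V, |pairSum Gp S T - pairSum Hp S T| ≤ β)
    {k : ℕ} (C : Fin k → Finset V)
    (hdisj : ∀ i j, i ≠ j → Disjoint (C i) (C j))
    (hcover : ∀ v : V, ∃ i, v ∈ C i)
    (hne : ∀ i, (C i).Nonempty) :
    |∑ i, ∑ j, if i < j then pairSum Hp (C i) (C j) - pairSum Gp (C i) (C j) else 0|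
      ≤ 2 * β :=
  stmt1_general Gp Hp β hGpsymm hHpsymm hcutp C hdisj
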